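/- arXiv:1801.06460 — 3 statements merged into one kernel-verified Lean document; each statement's English description precedes it below -/
import Mathlib

section
/- Let m ∈ ℤ>0, T' > 0, and given machines with loads ℓ_i ∈ [0, T'] whose total free space Σ_i (T' − ℓ_i) is at least L. Given unsplittable items each of length at most εT' with total length at most L, the items can be assigned to machines such that every machine's load is at most (1+ε)T'. -/
lemma stmt7_aux (m : ℕ) (ε T' : ℝ) (hε : 0 < ε) (hT' : 0 < T') :
    ∀ (k : ℕ) (ℓ : Fin m → ℝ), (∀ i, ℓ i ≤ (1 + ε) * T') →
    ∀ (a : Fin k → ℝ), (∀ j, 0 < a j) → (∀ j, a j ≤ ε * T') →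
    (∑ j, a j ≤ ∑ i, (T' - ℓ i)) →
    ∃ σ : Fin k → Fin m,
      ∀ i, ℓ i + ∑ j ∈ Finset.univ.filter (fun j => σ j = i), a j ≤ (1 + ε) * T' := by
  intro k
  induction k with
  | zero =>
    intro ℓ hℓ a _ _ _
    exact ⟨Fin.elim0, fun i => by simpa using hℓ i⟩
  | succ k ih =>
    intro ℓ hℓ a hpos hsmall hsum
    have hsumpos : 0 < ∑ j, a j :=
      Finset.sum_pos (fun j _ => hpos j) ⟨0, Finset.mem_univ _⟩
    have h0 : (0:ℝ) < ∑ i, (T' - ℓ i) := lt_of_lt_of_le hsumpos hsum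
    have hex : ∃ i : Fin m, (0:ℝ) < T' - ℓ i := by
      by_contra h
      push_neg at h
      have : ∑ i, (T' - ℓ i) ≤ 0 :=
        Finset.sum_nonpos (fun i _ => h i)
      linarith
    obtain ⟨i0, hi0⟩ := hex
    set ℓ' : Fin m → ℝ := fun i => ℓ i + if i = i0 then a 0 else 0 with hℓ'def
    have hℓ' : ∀ i, ℓ' i ≤ (1 + ε) * T' := by
      intro i
      simp only [hℓ'def]
      by_cases hi : i = i0
      · subst hi
        have := hsmall 0
        simp only [if_pos rfl, if_true]
        nlinarith
      · simp only [if_neg hi, add_zero]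
        exact hℓ i
    have hsum' : ∑ j : Fin k, a j.succ ≤ ∑ i, (T' - ℓ' i) := by
      have h1 : ∑ i, (T' - ℓ' i) = (∑ i, (T' - ℓ i)) - a 0 := by
        simp only [hℓ'def]
        rw [Finset.sum_sub_distrib]
        rw [show (∑ i, (ℓ i + if i = i0 then a 0 else 0))
            = (∑ i, ℓ i) + a 0 by
          rw [Finset.sum_add_distrib, Finset.sum_ite_eq' Finset.univ i0 (fun _ => a 0)]
          simp]
        rw [Finset.sum_sub_distrib]
        ring
      have h2 : ∑ j, a j = a 0 + ∑ j : Fin k, a j.succ := Fin.sum_univ_succ a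
      linarith
    obtain ⟨σ', hσ'⟩ := ih ℓ' hℓ' (fun j => a j.succ) (fun j => hpos _)
      (fun j => hsmall _) hsum'
    refine ⟨Fin.cases i0 σ', fun i => ?_⟩
    have key : ∑ j ∈ Finset.univ.filter (fun j => Fin.cases i0 σ' j = i), a j
        = (if i = i0 then a 0 else 0)
          + ∑ j ∈ Finset.univ.filter (fun j => σ' j = i), a j.succ := by
      rw [Finset.sum_filter, Finset.sum_filter, Fin.sum_univ_succ]
      simp only [Fin.cases_zero, Fin.cases_succ]
      congr 1
      by_cases h : i0 = i
      · simp [h]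
      · simp [h, Ne.symm h]
    have := hσ' i
    simp only [hℓ'def] at this
    rw [key]
    linarith

/-- Greedy insertion of small unsplittable items: items of length at most `εT'` and
total length at most the free space can be assigned so that every machine's load is
at most `(1+ε)T'`. -/
theorem stmt7 (m k : ℕ) (hm : 0 < m) (ε T' L : ℝ) (hε : 0 < ε) (hT' : 0 < T')
    (hL : 0 ≤ L) (ℓ : Fin m → ℝ) (hℓ : ∀ i, ℓ i ∈ Set.Icc 0 T')
    (hfree : L ≤ ∑ i, (T' - ℓ i)) (a : Fin k → ℝ) (ha : ∀ j, 0 < a j)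
    (hasmall : ∀ j, a j ≤ ε * T') (hsum : ∑ j, a j ≤ L) :
    ∃ σ : Fin k → Fin m,
      ∀ i, ℓ i + ∑ j ∈ Finset.univ.filter (fun j => σ j = i), a j ≤ (1 + ε) * T' := by
  apply stmt7_aux m ε T' hε hT' k ℓ
  · intro i
    have h := (hℓ i).2
    nlinarith
  · exact ha
  · exact hasmall
  · linarith
end

section
/- Let ε ∈ (0, 1/2], T > 0, T' > 0. Given a schedule on one machine with total length at most T' composed of batches, where each batch in need of a setup has jobs of total processing time at least ε²T, the number of distinct batches missing a setup on that machine is at most T'/(ε²T) + 2, and inserting all missing setups of length at most ε³T each increases the machine's load by at most εT' + 2ε³T. -/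
/-- Setup class repair step: on a machine of load at most `T'`, if every batch missing
a setup has total processing time at least `ε²T`, then at most `T'/(ε²T) + 2` batches
miss a setup, and inserting the missing setups (each of length at most `ε³T`) increases
the load by at most `εT' + 2ε³T`. -/
theorem stmt12 (ε T T' : ℝ) (hε : ε ∈ Set.Ioc (0:ℝ) (1/2 : ℝ))
    (hT : 0 < T) (hT' : 0 < T') (b : ℕ) (w : Fin b → ℝ) (hw : ∀ i, 0 ≤ w i)
    (htot : ∑ i, w i ≤ T') (M : Finset (Fin b))
    (hbig : ∀ i ∈ M, ε^2 * T ≤ w i)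
    (su : Fin b → ℝ) (hsu : ∀ i, 0 ≤ su i ∧ su i ≤ ε^3 * T) :
    (M.card : ℝ) ≤ T' / (ε^2 * T) + 2 ∧ ∑ i ∈ M, su i ≤ ε * T' + 2 * ε^3 * T := by
  have hε0 : 0 < ε := hε.1
  have hden : 0 < ε^2 * T := by positivity
  have h1 : (M.card : ℝ) * (ε^2 * T) ≤ ∑ i ∈ M, w i := by
    simpa [nsmul_eq_mul] using Finset.card_nsmul_le_sum M w (ε^2 * T) hbig
  have h2 : ∑ i ∈ M, w i ≤ ∑ i, w i :=
    Finset.sum_le_sum_of_subset_of_nonneg (Finset.subset_univ M) (fun i _ _ => hw i)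
  have hcard : (M.card : ℝ) ≤ T' / (ε^2 * T) := by
    rw [le_div_iff₀ hden]
    exact h1.trans (h2.trans htot)
  refine ⟨hcard.trans (by linarith), ?_⟩
  have h3 : ∑ i ∈ M, su i ≤ (M.card : ℝ) * (ε^3 * T) := by
    simpa [nsmul_eq_mul] using Finset.sum_le_card_nsmul M su (ε^3 * T) (fun i _ => (hsu i).2)
  have h4 : (M.card : ℝ) * (ε^3 * T) ≤ (T' / (ε^2 * T) + 2) * (ε^3 * T) := by
    apply mul_le_mul_of_nonneg_right (by linarith) (by positivity)
  have h5 : (T' / (ε^2 * T) + 2) * (ε^3 * T) = ε * T' + 2 * ε^3 * T := by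
    field_simp
  linarith [h3, h4, h5.le]
end

section
/- Let ε ∈ (0,1) with 1/ε ∈ ℤ, T > 0, and consider jobs of a single class with individual processing times < ε⁴T and total processing time P. Replacing them with ⌈P/(ε⁴T)⌉ placeholder jobs each of processing time exactly ε⁴T: any assignment of the original jobs to machines, where machine i receives total length P_i from this class, can be converted to an assignment of the placeholders where machine i receives at most ⌈P_i/(ε⁴T)⌉ placeholders, and Σ_i ⌈P_i/(ε⁴T)⌉ ≥ ⌈P/(ε⁴T)⌉; consequently the placeholder load on each machine exceeds the original by at most ε⁴T. -/
/-!
Placeholders are distributed greedily: machine `i` may take up to `⌈P_i/(ε⁴T)⌉` of them,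
and these capacities suffice because the ceiling is subadditive,
`⌈Σ_i P_i/(ε⁴T)⌉ ≤ Σ_i ⌈P_i/(ε⁴T)⌉`. Taking at most `⌈P_i/(ε⁴T)⌉ < P_i/(ε⁴T) + 1`
placeholders raises the load of machine `i` by less than one placeholder.
-/

theorem Int.ceil_sum_le_sum_ceil {ι α : Type*} [Field α] [LinearOrder α] [IsStrictOrderedRing α]
    [FloorRing α] (s : Finset ι) (f : ι → α) :
    ⌈∑ i ∈ s, f i⌉ ≤ ∑ i ∈ s, ⌈f i⌉ := by
  rw [Int.ceil_le, Int.cast_sum]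
  exact Finset.sum_le_sum fun i _ => Int.le_ceil (f i)

theorem Finset.exists_le_sum_eq_of_le_sum {ι : Type*} [DecidableEq ι] (s : Finset ι)
    (b : ι → ℕ) {N : ℕ} (hN : N ≤ ∑ i ∈ s, b i) :
    ∃ c : ι → ℕ, (∀ i, c i ≤ b i) ∧ ∑ i ∈ s, c i = N := by
  induction s using Finset.induction_on generalizing N with
  | empty =>
    rw [Finset.sum_empty, Nat.le_zero] at hN
    exact ⟨0, fun _ => Nat.zero_le _, by simp [hN]⟩
  | @insert a s ha ih =>
    rw [Finset.sum_insert ha] at hN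
    obtain ⟨c, hcb, hcs⟩ := ih (N := N - min N (b a)) (by omega)
    refine ⟨Function.update c a (min N (b a)), fun i => ?_, ?_⟩
    · rcases eq_or_ne i a with rfl | hi
      · simp
      · simpa [Function.update_of_ne hi] using hcb i
    · rw [Finset.sum_insert ha, Function.update_self,
        Finset.sum_congr rfl fun i hi => Function.update_of_ne (ne_of_mem_of_not_mem hi ha) _ _,
        hcs]
      omega

theorem Finset.exists_natCast_le_sum_eq_of_le_sum {ι : Type*} [DecidableEq ι] (s : Finset ι)
    {b : ι → ℤ} (hb : ∀ i, 0 ≤ b i) {N : ℤ} (hN0 : 0 ≤ N) (hN : N ≤ ∑ i ∈ s, b i) :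
    ∃ c : ι → ℕ, (∀ i, (c i : ℤ) ≤ b i) ∧ ∑ i ∈ s, (c i : ℤ) = N := by
  have hb' : ∀ i, ((b i).toNat : ℤ) = b i := fun i => Int.toNat_of_nonneg (hb i)
  have hNat : N.toNat ≤ ∑ i ∈ s, (b i).toNat := by
    zify; simpa only [hb', Int.toNat_of_nonneg hN0] using hN
  obtain ⟨c, hcb, hcs⟩ := s.exists_le_sum_eq_of_le_sum (fun i => (b i).toNat) hNat
  refine ⟨c, fun i => ?_, ?_⟩
  · rw [← hb' i]; exact_mod_cast hcb i
  · rw [← Int.toNat_of_nonneg hN0, ← hcs, Nat.cast_sum]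

theorem mul_le_add_of_le_ceil_div {α : Type*} [Field α] [LinearOrder α] [IsStrictOrderedRing α]
    [FloorRing α] {x S : α} {c : ℤ} (hS : 0 < S) (hc : c ≤ ⌈x / S⌉) :
    c * S ≤ x + S := by
  have hcx : (c : α) ≤ x / S + 1 :=
    (Int.cast_le.2 hc).trans (Int.ceil_lt_add_one _).le
  calc (c : α) * S ≤ (x / S + 1) * S := mul_le_mul_of_nonneg_right hcx hS.le
    _ = x + S := by field_simp

/-- Replacing tiny jobs of one class by placeholders of size `ε⁴T`: if machine `i`
receives total tiny length `P_i`, the `⌈P/(ε⁴T)⌉` placeholders can be distributed so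
that machine `i` receives at most `⌈P_i/(ε⁴T)⌉` of them; moreover
`Σ_i ⌈P_i/(ε⁴T)⌉ ≥ ⌈P/(ε⁴T)⌉`, and the placeholder load on each machine exceeds the
original tiny load by at most `ε⁴T`. -/
theorem stmt15 (ε T : ℝ) (hε : ε ∈ Set.Ioo (0:ℝ) 1) (hT : 0 < T) (m : ℕ)
    (Pm : Fin m → ℝ) (hPm : ∀ i, 0 ≤ Pm i) :
    ⌈(∑ i, Pm i) / (ε^4 * T)⌉ ≤ ∑ i, ⌈Pm i / (ε^4 * T)⌉ ∧
    ∃ c : Fin m → ℕ, (∑ i, (c i : ℤ)) = ⌈(∑ i, Pm i) / (ε^4 * T)⌉ ∧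
      ∀ i, (c i : ℤ) ≤ ⌈Pm i / (ε^4 * T)⌉ ∧ (c i : ℝ) * (ε^4 * T) ≤ Pm i + ε^4 * T := by
  have hS : 0 < ε ^ 4 * T := by have := hε.1; positivity
  have hcap : ⌈(∑ i, Pm i) / (ε^4 * T)⌉ ≤ ∑ i, ⌈Pm i / (ε^4 * T)⌉ := by
    rw [Finset.sum_div]; exact Int.ceil_sum_le_sum_ceil _ _
  have hN0 : 0 ≤ ⌈(∑ i, Pm i) / (ε^4 * T)⌉ :=
    Int.ceil_nonneg (div_nonneg (Finset.sum_nonneg fun i _ => hPm i) hS.le)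
  obtain ⟨c, hcb, hcs⟩ := Finset.univ.exists_natCast_le_sum_eq_of_le_sum
    (fun i => Int.ceil_nonneg (div_nonneg (hPm i) hS.le)) hN0 hcap
  refine ⟨hcap, c, hcs, fun i => ⟨hcb i, ?_⟩⟩
  exact_mod_cast mul_le_add_of_le_ceil_div hS (hcb i)
end
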